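/- Let 𝓔, 𝓕, 𝓖, 𝓗 be vector spaces over a field k and let A : 𝓔 → 𝓕, B : 𝓖 → 𝓗, P : 𝓖 → 𝓔, Q : 𝓔 → 𝓖, R : 𝓗 → 𝓕, S : 𝓕 → 𝓗, T : 𝓕 → 𝓔 be linear maps. If A is a silvern transmutation of B by philosopher's stone (P,Q,R,S,T), then the restriction of Q to ker A is an injective linear map from ker A into ker B, P(ker B) ⊆ ker A, and the restriction of P∘Q to ker A is the identity of ker A. -/

import Mathlib

namespace LinearMap

variable {k E F G H : Type*} [Semiring k]
  [AddCommMonoid E] [Module k E] [AddCommMonoid F] [Module k F]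
  [AddCommMonoid G] [Module k G] [AddCommMonoid H] [Module k H]

theorem ker_le_comap_ker_of_comp_eq_comp {A : E →ₗ[k] F} {B : G →ₗ[k] H} {P : G →ₗ[k] E}
    {R : H →ₗ[k] F} (h : A ∘ₗ P = R ∘ₗ B) : ker B ≤ (ker A).comap P := by
  rw [← ker_comp, h]
  exact ker_le_ker_comp B R

theorem leftInvOn_ker_of_add_comp_eq_id {A : E →ₗ[k] F} {P : G →ₗ[k] E} {Q : E →ₗ[k] G}
    {T : F →ₗ[k] E} (h : P ∘ₗ Q + T ∘ₗ A = id) : Set.LeftInvOn P Q (ker A) := by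
  intro x hx
  simpa [mem_ker.mp hx] using congr($h x)

end LinearMap

/-- If `A` is a silvern transmutation of `B` by `(P,Q,R,S,T)`, then the restriction of `Q` to
`ker A` is an injective linear map from `ker A` into `ker B`, `P(ker B) ⊆ ker A`, and the
restriction of `P∘Q` to `ker A` is the identity. -/
theorem silvern_ker_properties
    {k : Type*} [Field k]
    {E F G H : Type*}
    [AddCommGroup E] [Module k E] [AddCommGroup F] [Module k F]
    [AddCommGroup G] [Module k G] [AddCommGroup H] [Module k H]
    (A : E →ₗ[k] F) (B : G →ₗ[k] H) (P : G →ₗ[k] E) (Q : E →ₗ[k] G)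
    (R : H →ₗ[k] F) (S : F →ₗ[k] H) (T : F →ₗ[k] E)
    (hpost : A ∘ₗ P = R ∘ₗ B)
    (hpre : B ∘ₗ Q = S ∘ₗ A)
    (hreg : P ∘ₗ Q + T ∘ₗ A = LinearMap.id) :
    (∀ x ∈ LinearMap.ker A, Q x ∈ LinearMap.ker B) ∧
    Set.InjOn Q (LinearMap.ker A) ∧
    (∀ x ∈ LinearMap.ker B, P x ∈ LinearMap.ker A) ∧
    (∀ x ∈ LinearMap.ker A, P (Q x) = x) := by
  have hPQ := LinearMap.leftInvOn_ker_of_add_comp_eq_id hreg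
  exact ⟨fun _ hx => LinearMap.ker_le_comap_ker_of_comp_eq_comp hpre hx, hPQ.injOn,
    fun _ hx => LinearMap.ker_le_comap_ker_of_comp_eq_comp hpost hx, hPQ⟩
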